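/- For a strictly r-furcating rooted tree T with n leaves, the number of labeled histories equals ((n-1)/(r-1))! divided by the product over internal nodes v of (m(v)-1)/(r-1), where m(v) is the number of leaves descended from v. -/

import Mathlib

/-!
A labeled history is a bijective labeling of the internal nodes that decreases away from the
root, so the root carries the largest label. The remaining labels label the forest of subtrees
of the root, and a labeling of a disjoint union `A ⊕ B` is the same as the choice of the set of
`|A|` labels used on `A` together with labelings of `A` and of `B`; this gives a binomial factor
per child. Induction on the tree then yields the hook length formula
`N T * ∏_v w(v) = w(T)!`, where `w(v)` counts the internal nodes of the subtree at `v`.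
In a strictly `r`-furcating tree `m(v) = (r - 1) w(v) + 1`, so `(m(v) - 1) / (r - 1) = w(v)`.
-/

inductive RTree : Type where
  | leaf : RTree
  | node : List RTree → RTree

namespace RTree

def leaves : RTree → ℕ
  | leaf => 1
  | node cs => (cs.attach.map fun c => leaves c.1).sum
decreasing_by simp only [node.sizeOf_spec]; have := List.sizeOf_lt_of_mem c.2; omega

def wcount : RTree → ℕ
  | leaf => 0
  | node cs => 1 + (cs.attach.map fun c => wcount c.1).sum
decreasing_by simp only [node.sizeOf_spec]; have := List.sizeOf_lt_of_mem c.2; omega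

def delta : RTree → ℕ
  | leaf => 0
  | node cs => 1 + (cs.attach.map fun c => delta c.1).foldr max 0
decreasing_by simp only [node.sizeOf_spec]; have := List.sizeOf_lt_of_mem c.2; omega

def prodW : RTree → ℕ
  | leaf => 1
  | node cs =>
      (1 + (cs.attach.map fun c => wcount c.1).sum) * (cs.attach.map fun c => prodW c.1).prod
decreasing_by simp only [node.sizeOf_spec]; have := List.sizeOf_lt_of_mem c.2; omega

def subtreeAt : List ℕ → RTree → Option RTree
  | [], t => some t
  | _ :: _, leaf => none
  | i :: p, node cs => (cs[i]?).bind (fun c => subtreeAt p c)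

def Internal (T : RTree) : Type := {p : List ℕ // ∃ cs, subtreeAt p T = some (node cs)}

def IsLabeledHistory (T : RTree) (f : Internal T → Fin (wcount T)) : Prop :=
  Function.Bijective f ∧ ∀ u v : Internal T, v.1 <+: u.1 → v.1 ≠ u.1 → f u < f v

noncomputable def N (T : RTree) : ℕ :=
  Nat.card {f : Internal T → Fin (wcount T) // IsLabeledHistory T f}

def IsTieHistory (T : RTree) (z : ℕ) (f : Internal T → Fin z) : Prop :=
  Function.Surjective f ∧ ∀ u v : Internal T, v.1 <+: u.1 → v.1 ≠ u.1 → f u < f v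

noncomputable def E (T : RTree) (z : ℕ) : ℕ :=
  Nat.card {f : Internal T → Fin z // IsTieHistory T z f}

noncomputable def NTie (T : RTree) : ℕ :=
  Nat.card ((z : ℕ) × {f : Internal T → Fin z // IsTieHistory T z f})

def replaceAt : List ℕ → RTree → RTree → RTree
  | [], _, s => s
  | _ :: _, leaf, _ => leaf
  | i :: p, node cs, s => node (cs.set i (replaceAt p (cs.getD i leaf) s))

end RTree

namespace RTree

/-- Product over internal nodes `v` of `(m(v)-1)/(r-1)`, where `m(v)` is the number
of leaves descended from `v`. -/
def prodMr (r : ℕ) : RTree → ℕ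
  | leaf => 1
  | node cs =>
      ((leaves (node cs) - 1) / (r - 1)) * (cs.attach.map fun c => prodMr r c.1).prod
decreasing_by simp only [node.sizeOf_spec]; have := List.sizeOf_lt_of_mem c.2; omega

end RTree

section Labelings

variable {α β γ δ A B : Type*} {R : α → α → Prop} {RA : A → A → Prop}
  {RB : B → B → Prop}

def RelLabeling (R : α → α → Prop) (γ : Type*) [LT γ] : Type _ :=
  {f : α → γ // Function.Bijective f ∧ ∀ u v, R u v → f u < f v}

noncomputable def numRelLabelings (R : α → α → Prop) : ℕ :=
  Nat.card (RelLabeling R (Fin (Nat.card α)))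

instance [Finite α] [Finite γ] [LT γ] : Finite (RelLabeling R γ) :=
  Subtype.finite

def LiftRelTop (R : α → α → Prop) : Option α → Option α → Prop
  | some a, some b => R a b
  | some _, none => True
  | none, _ => False

theorem bijective_sumElim_val_comp_iff {S : Set γ} (g : A → S) (h : B → ↥Sᶜ) :
    Function.Bijective (Sum.elim (Subtype.val ∘ g) (Subtype.val ∘ h)) ↔
      Function.Bijective g ∧ Function.Bijective h := by
  classical
  have : Sum.elim (Subtype.val ∘ g) (Subtype.val ∘ h) =
      Equiv.Set.sumCompl S ∘ Sum.map g h := by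
    ext (a | b) <;> rfl
  rw [this, Equiv.comp_bijective, Sum.map_bijective]

namespace RelLabeling

def congrRight [Preorder γ] [Preorder δ] (e : γ ≃o δ) :
    RelLabeling R γ ≃ RelLabeling R δ where
  toFun f := ⟨e ∘ f.1, e.bijective.comp f.2.1, fun u v h => e.lt_iff_lt.2 (f.2.2 u v h)⟩
  invFun f := ⟨e.symm ∘ f.1, e.symm.bijective.comp f.2.1,
    fun u v h => e.symm.lt_iff_lt.2 (f.2.2 u v h)⟩
  left_inv _ := Subtype.ext <| funext fun _ => e.symm_apply_apply _
  right_inv _ := Subtype.ext <| funext fun _ => e.apply_symm_apply _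

def congrLeft [LT γ] {R' : β → β → Prop} (e : R ≃r R') :
    RelLabeling R γ ≃ RelLabeling R' γ where
  toFun f := ⟨f.1 ∘ e.symm, f.2.1.comp e.symm.bijective,
    fun _ _ h => f.2.2 _ _ (e.symm.map_rel_iff.2 h)⟩
  invFun f := ⟨f.1 ∘ e, f.2.1.comp e.bijective, fun _ _ h => f.2.2 _ _ (e.map_rel_iff.2 h)⟩
  left_inv f := Subtype.ext <| funext fun _ => congrArg f.1 (e.symm_apply_apply _)
  right_inv f := Subtype.ext <| funext fun _ => congrArg f.1 (e.apply_symm_apply _)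

theorem apply_none_eq_top [Preorder γ] (f : RelLabeling (LiftRelTop R) (WithTop γ)) :
    f.1 none = ⊤ := by
  obtain ⟨x, hx⟩ := f.2.1.2 ⊤
  cases x with
  | none => exact hx
  | some a => exact absurd hx (ne_top_of_lt (f.2.2 (some a) none trivial))

def withTopEquiv [Preorder γ] : RelLabeling (LiftRelTop R) (WithTop γ) ≃ RelLabeling R γ where
  toFun f := by
    refine ⟨fun a => (f.1 (some a)).untop (ne_top_of_lt (f.2.2 (some a) none trivial)),
      ⟨fun a b h => ?_, fun c => ?_⟩, fun u v h => ?_⟩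
    · exact Option.some_injective _
        (f.2.1.1 (by simpa using congrArg ((↑) : γ → WithTop γ) h))
    · obtain ⟨x, hx⟩ := f.2.1.2 c
      cases x with
      | none => exact absurd (apply_none_eq_top f ▸ hx) WithTop.top_ne_coe
      | some a => exact ⟨a, by simp [hx]⟩
    · exact (WithTop.untop_lt_iff _).2 (by simpa using f.2.2 (some u) (some v) h)
  invFun g := by
    refine ⟨Option.map g.1, ⟨Option.map_injective g.2.1.1, fun y => ?_⟩, fun u v h => ?_⟩
    · cases y with
      | top => exact ⟨none, rfl⟩
      | coe c =>
        obtain ⟨a, rfl⟩ := g.2.1.2 c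
        exact ⟨some a, rfl⟩
    · cases u <;> cases v
      · exact h.elim
      · exact h.elim
      · exact WithTop.coe_lt_top _
      · exact WithTop.coe_lt_coe.2 (g.2.2 _ _ h)
  left_inv f := Subtype.ext <| funext fun x => by
    cases x with
    | none => exact (apply_none_eq_top f).symm
    | some a => exact WithTop.coe_untop _ _
  right_inv g := rfl

def sumFiberEquiv [Preorder γ] (S : Set γ) :
    {f : RelLabeling (Sum.LiftRel RA RB) γ // Set.range (f.1 ∘ Sum.inl) = S} ≃
      RelLabeling RA S × RelLabeling RB ↥Sᶜ where
  toFun f := by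
    obtain ⟨⟨f, hbij, hmono⟩, hS⟩ := f
    let g (a : A) : S := ⟨f (.inl a), hS ▸ ⟨a, rfl⟩⟩
    let h (b : B) : ↥Sᶜ := ⟨f (.inr b), fun hb => by
      obtain ⟨a, ha⟩ := hS ▸ hb
      exact Sum.inl_ne_inr (hbij.1 ha)⟩
    have hgh := (bijective_sumElim_val_comp_iff g h).1 (Sum.elim_comp_inl_inr f ▸ hbij)
    exact (⟨g, hgh.1, fun u v huv => hmono _ _ (.inl huv)⟩,
      ⟨h, hgh.2, fun u v huv => hmono _ _ (.inr huv)⟩)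
  invFun gh := by
    obtain ⟨⟨g, hg, hgmono⟩, ⟨h, hh, hhmono⟩⟩ := gh
    refine ⟨⟨Sum.elim (Subtype.val ∘ g) (Subtype.val ∘ h),
      (bijective_sumElim_val_comp_iff g h).2 ⟨hg, hh⟩, ?_⟩, ?_⟩
    · rintro _ _ (⟨huv⟩ | ⟨huv⟩)
      · exact hgmono _ _ huv
      · exact hhmono _ _ huv
    · simp [Set.range_comp, hg.2.range_eq]
  left_inv := fun ⟨⟨f, _, _⟩, _⟩ => Subtype.ext <| Subtype.ext <| Sum.elim_comp_inl_inr f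
  right_inv := fun ⟨⟨_, _, _⟩, ⟨_, _, _⟩⟩ => rfl

end RelLabeling

open RelLabeling

theorem card_relLabeling [LinearOrder γ] [Finite γ] :
    Nat.card (RelLabeling R γ) = if Nat.card γ = Nat.card α then numRelLabelings R else 0 := by
  split_ifs with h
  · have := Fintype.ofFinite γ
    exact (Nat.card_congr (congrRight
      (Fintype.orderIsoFinOfCardEq γ (by rw [← Nat.card_eq_fintype_card, h])))).symm
  · exact Nat.card_eq_zero.2 (.inl ⟨fun f => h (Nat.card_eq_of_bijective f.1 f.2.1).symm⟩)

theorem numRelLabelings_congr {R' : β → β → Prop} (e : R ≃r R') :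
    numRelLabelings R = numRelLabelings R' := by
  rw [numRelLabelings, Nat.card_congr (congrLeft e), card_relLabeling,
    Nat.card_fin, Nat.card_congr e.toEquiv, if_pos rfl]

theorem numRelLabelings_of_isEmpty [IsEmpty α] : numRelLabelings R = 1 := by
  rw [numRelLabelings, Nat.card_of_isEmpty (α := α), Nat.card_eq_one_iff_unique]
  exact ⟨⟨fun f g => Subtype.ext (funext isEmptyElim)⟩,
    ⟨⟨isEmptyElim, ⟨isEmptyElim, fun y => y.elim0⟩, isEmptyElim⟩⟩⟩

theorem numRelLabelings_liftRelTop [Finite α] :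
    numRelLabelings (LiftRelTop R) = numRelLabelings R := by
  have hcard : Nat.card (WithTop (Fin (Nat.card α))) = Nat.card (Option α) :=
    (Finite.card_option (α := Fin _)).trans (by rw [Nat.card_fin, Finite.card_option])
  have := Nat.card_congr (withTopEquiv (R := R) (γ := Fin (Nat.card α)))
  rwa [card_relLabeling, if_pos hcard] at this

theorem numRelLabelings_sumLiftRel [Finite A] [Finite B] :
    numRelLabelings (Sum.LiftRel RA RB) =
      (Nat.card A + Nat.card B).choose (Nat.card A) * numRelLabelings RA * numRelLabelings RB := by
  classical
  set n := Nat.card (A ⊕ B) with hn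
  rw [Nat.card_sum] at hn
  let leftLabels (f : RelLabeling (Sum.LiftRel RA RB) (Fin n)) : Finset (Fin n) :=
    (Set.toFinite (Set.range (f.1 ∘ Sum.inl))).toFinset
  have hfiber (S : Finset (Fin n)) : Nat.card {f // leftLabels f = S} =
      if S.card = Nat.card A then numRelLabelings RA * numRelLabelings RB else 0 := by
    have hS (f) : leftLabels f = S ↔ Set.range (f.1 ∘ Sum.inl) = S := by
      rw [← Finset.coe_inj, Set.Finite.coe_toFinset]
    rw [Nat.card_congr ((Equiv.subtypeEquivRight hS).trans (sumFiberEquiv (S : Set (Fin n)))),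
      Nat.card_prod, card_relLabeling, card_relLabeling]
    have hSc : ((S : Set (Fin n))ᶜ).ncard = n - S.card := by
      rw [Set.ncard_compl, Nat.card_fin, Set.ncard_coe_finset]
    simp only [Nat.card_coe_set_eq, Set.ncard_coe_finset, hSc]
    split_ifs <;> first | rfl | omega
  rw [numRelLabelings, ← Nat.card_congr (Equiv.sigmaFiberEquiv leftLabels), Nat.card_sigma]
  simp_rw [hfiber]
  rw [← Finset.sum_filter, Finset.sum_const, ← Finset.powerset_univ,
    ← Finset.powersetCard_eq_filter, Finset.card_powersetCard, Finset.card_univ, Fintype.card_fin,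
    hn, smul_eq_mul, mul_assoc]

end Labelings

namespace RTree

@[simp] theorem leaves_leaf : leaves leaf = 1 := by rw [leaves]

@[simp] theorem leaves_node (cs : List RTree) : leaves (node cs) = (cs.map leaves).sum := by
  rw [leaves, List.attach_map_val]

@[simp] theorem wcount_leaf : wcount leaf = 0 := by rw [wcount]

@[simp] theorem wcount_node (cs : List RTree) : wcount (node cs) = (cs.map wcount).sum + 1 := by
  rw [wcount, List.attach_map_val, Nat.add_comm]

@[simp] theorem prodW_leaf : prodW leaf = 1 := by rw [prodW]

@[simp] theorem prodW_node (cs : List RTree) :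
    prodW (node cs) = ((cs.map wcount).sum + 1) * (cs.map prodW).prod := by
  rw [prodW, List.attach_map_val, List.attach_map_val, Nat.add_comm 1]

@[simp] theorem prodMr_leaf (r : ℕ) : prodMr r leaf = 1 := by rw [prodMr]

@[simp] theorem prodMr_node (r : ℕ) (cs : List RTree) :
    prodMr r (node cs) = (leaves (node cs) - 1) / (r - 1) * (cs.map (prodMr r)).prod := by
  rw [prodMr, List.attach_map_val]

def IsProperDescendant {T : RTree} (u v : Internal T) : Prop := v.1 <+: u.1 ∧ v.1 ≠ u.1

instance (T : RTree) : DecidableEq (Internal T) :=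
  inferInstanceAs (DecidableEq (Subtype _))

def root (cs : List RTree) : Internal (node cs) := ⟨[], cs, rfl⟩

abbrev ForestInternal (cs : List RTree) : Type := {u : Internal (node cs) // u ≠ root cs}

abbrev forestRel (cs : List RTree) : ForestInternal cs → ForestInternal cs → Prop :=
  Subrel IsProperDescendant (· ≠ root cs)

instance : IsEmpty (Internal leaf) :=
  ⟨fun ⟨p, _, hp⟩ => by cases p <;> simp [subtreeAt] at hp⟩

instance : IsEmpty (ForestInternal []) :=
  ⟨fun ⟨⟨p, _, hp⟩, hne⟩ => by
    cases p with
    | nil => exact hne rfl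
    | cons i q => simp [subtreeAt] at hp⟩

theorem val_ne_nil_of_ne_root {cs : List RTree} {u : Internal (node cs)} (hu : u ≠ root cs) :
    u.1 ≠ [] :=
  fun h => hu (Subtype.ext h)

def internalNodeRelIso (cs : List RTree) :
    LiftRelTop (forestRel cs) ≃r @IsProperDescendant (node cs) where
  toEquiv := Equiv.optionSubtypeNe (root cs)
  map_rel_iff' := by
    rintro (_ | ⟨u, hu⟩) (_ | ⟨v, hv⟩)
    · exact iff_false_intro fun h => h.2 rfl
    · exact iff_false_intro fun h => val_ne_nil_of_ne_root hv (List.prefix_nil.1 h.1)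
    · exact iff_true_intro ⟨List.nil_prefix, (val_ne_nil_of_ne_root hu).symm⟩
    · exact Iff.rfl

def forestConsEquiv (c : RTree) (cs : List RTree) :
    Internal c ⊕ ForestInternal cs ≃ ForestInternal (c :: cs) where
  toFun
    | .inl u => ⟨⟨0 :: u.1, u.2⟩, fun h => List.cons_ne_nil _ _ (congrArg Subtype.val h)⟩
    | .inr ⟨⟨[], _⟩, hne⟩ => absurd rfl hne
    | .inr ⟨⟨i :: q, hq⟩, _⟩ =>
        ⟨⟨(i + 1) :: q, hq⟩, fun h => List.cons_ne_nil _ _ (congrArg Subtype.val h)⟩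
  invFun
    | ⟨⟨[], _⟩, hne⟩ => absurd rfl hne
    | ⟨⟨0 :: q, hq⟩, _⟩ => .inl ⟨q, hq⟩
    | ⟨⟨(i + 1) :: q, hq⟩, _⟩ =>
        .inr ⟨⟨i :: q, hq⟩, fun h => List.cons_ne_nil _ _ (congrArg Subtype.val h)⟩
  left_inv
    | .inl _ => rfl
    | .inr ⟨⟨[], _⟩, hne⟩ => absurd rfl hne
    | .inr ⟨⟨_ :: _, _⟩, _⟩ => rfl
  right_inv
    | ⟨⟨[], _⟩, hne⟩ => absurd rfl hne
    | ⟨⟨0 :: _, _⟩, _⟩ => rfl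
    | ⟨⟨(_ + 1) :: _, _⟩, _⟩ => rfl

def forestConsRelIso (c : RTree) (cs : List RTree) :
    Sum.LiftRel (@IsProperDescendant c) (forestRel cs) ≃r forestRel (c :: cs) where
  toEquiv := forestConsEquiv c cs
  map_rel_iff' := by
    rintro (u | u) (v | v) <;>
      simp only [Sum.liftRel_inl_inl, Sum.liftRel_inr_inr, Sum.not_liftRel_inl_inr,
        Sum.not_liftRel_inr_inl, iff_false]
    · simp [forestConsEquiv, IsProperDescendant]
    · rcases v with ⟨⟨_ | ⟨j, q⟩, hq⟩, hv⟩
      · exact absurd rfl hv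
      · simp [forestConsEquiv, IsProperDescendant]
    · rcases u with ⟨⟨_ | ⟨i, p⟩, hp⟩, hu⟩
      · exact absurd rfl hu
      · simp [forestConsEquiv, IsProperDescendant]
    · rcases u with ⟨⟨_ | ⟨i, p⟩, hp⟩, hu⟩
      · exact absurd rfl hu
      rcases v with ⟨⟨_ | ⟨j, q⟩, hq⟩, hv⟩
      · exact absurd rfl hv
      · simp [forestConsEquiv, IsProperDescendant]

mutual

theorem finite_internal : ∀ T : RTree, Finite (Internal T)
  | leaf => inferInstance
  | node cs =>
    have := finite_forestInternal cs
    .of_equiv _ (internalNodeRelIso cs).toEquiv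

theorem finite_forestInternal : ∀ cs : List RTree, Finite (ForestInternal cs)
  | [] => inferInstance
  | c :: cs =>
    have := finite_internal c
    have := finite_forestInternal cs
    .of_equiv _ (forestConsEquiv c cs)

end

instance (T : RTree) : Finite (Internal T) := finite_internal T

mutual

theorem card_internal : ∀ T : RTree, Nat.card (Internal T) = wcount T
  | leaf => by simp
  | node cs => by
    rw [← Nat.card_congr (internalNodeRelIso cs).toEquiv, Finite.card_option,
      card_forestInternal, wcount_node]

theorem card_forestInternal :
    ∀ cs : List RTree, Nat.card (ForestInternal cs) = (cs.map wcount).sum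
  | [] => by simp
  | c :: cs => by
    rw [← Nat.card_congr (forestConsEquiv c cs), Nat.card_sum, card_internal,
      card_forestInternal, List.map_cons, List.sum_cons]

end

mutual

theorem numRelLabelings_mul_prodW :
    ∀ T : RTree, numRelLabelings (@IsProperDescendant T) * prodW T = (wcount T).factorial
  | leaf => by simp [numRelLabelings_of_isEmpty]
  | node cs => by
    rw [← numRelLabelings_congr (internalNodeRelIso cs), numRelLabelings_liftRelTop, prodW_node,
      mul_left_comm, numRelLabelings_mul_prod_prodW, wcount_node, Nat.factorial_succ]

theorem numRelLabelings_mul_prod_prodW : ∀ cs : List RTree,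
    numRelLabelings (forestRel cs) * (cs.map prodW).prod = (cs.map wcount).sum.factorial
  | [] => by simp [numRelLabelings_of_isEmpty]
  | c :: cs => by
    rw [← numRelLabelings_congr (forestConsRelIso c cs), numRelLabelings_sumLiftRel,
      card_internal, card_forestInternal, Nat.choose_symm_add, List.map_cons, List.prod_cons,
      List.map_cons, List.sum_cons, ← Nat.add_choose_mul_factorial_mul_factorial,
      ← numRelLabelings_mul_prodW c, ← numRelLabelings_mul_prod_prodW cs]
    ring

end

theorem N_eq_numRelLabelings (T : RTree) : N T = numRelLabelings (@IsProperDescendant T) := by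
  rw [numRelLabelings, card_internal]
  exact Nat.card_congr <| Equiv.subtypeEquivRight fun f => by
    simp only [IsLabeledHistory, IsProperDescendant, and_imp]

theorem N_mul_prodW (T : RTree) : N T * prodW T = (wcount T).factorial :=
  N_eq_numRelLabelings T ▸ numRelLabelings_mul_prodW T

theorem prodW_pos (T : RTree) : 0 < prodW T :=
  Nat.pos_of_ne_zero (right_ne_zero_of_mul (N_mul_prodW T ▸ Nat.factorial_ne_zero _))

def IsStrictlyFurcating (r : ℕ) (T : RTree) : Prop :=
  ∀ p cs, subtreeAt p T = some (node cs) → cs.length = r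

namespace IsStrictlyFurcating

variable {r : ℕ} {cs : List RTree}

theorem length_eq (h : IsStrictlyFurcating r (node cs)) : cs.length = r :=
  h [] cs rfl

theorem of_mem (h : IsStrictlyFurcating r (node cs)) {c : RTree} (hc : c ∈ cs) :
    IsStrictlyFurcating r c := by
  obtain ⟨i, hi, rfl⟩ := List.getElem_of_mem hc
  exact fun p ds hp => h (i :: p) ds (by simp [subtreeAt, hi, hp])

theorem leaves_eq (hr : 1 ≤ r) : ∀ {T : RTree}, IsStrictlyFurcating r T →
    leaves T = (r - 1) * wcount T + 1
  | leaf, _ => by simp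
  | node cs, h => by
    have ih (c) (hc : c ∈ cs) := leaves_eq hr (h.of_mem hc)
    obtain ⟨k, rfl⟩ : ∃ k, r = k + 1 := ⟨r - 1, by omega⟩
    rw [leaves_node, List.map_congr_left ih]
    simp only [List.sum_map_add, List.sum_map_mul_left, List.map_const', List.sum_replicate,
      h.length_eq, smul_eq_mul, mul_one, wcount_node, add_tsub_cancel_right]
    ring

theorem leaves_sub_one_div (hr : 2 ≤ r) {T : RTree} (h : IsStrictlyFurcating r T) :
    (leaves T - 1) / (r - 1) = wcount T := by
  rw [h.leaves_eq (by omega), Nat.add_sub_cancel, Nat.mul_div_cancel_left _ (by omega)]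

theorem prodMr_eq_prodW (hr : 2 ≤ r) : ∀ {T : RTree}, IsStrictlyFurcating r T →
    prodMr r T = prodW T
  | leaf, _ => by simp
  | node cs, h => by
    rw [prodMr_node, prodW_node, h.leaves_sub_one_div hr, wcount_node,
      List.map_congr_left fun c hc => prodMr_eq_prodW hr (h.of_mem hc)]

end IsStrictlyFurcating

/-- for a strictly `r`-furcating tree `T` with `n` leaves, the number
of labeled histories equals `((n-1)/(r-1))! / ∏_{v internal} (m(v)-1)/(r-1)`. -/
theorem N_of_strictly_rfurcating (r : ℕ) (T : RTree) (hr : 2 ≤ r)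
    (hfurc : ∀ (p : List ℕ) (cs : List RTree),
      subtreeAt p T = some (node cs) → cs.length = r) :
    N T = Nat.factorial ((leaves T - 1) / (r - 1)) / prodMr r T := by
  have h : IsStrictlyFurcating r T := hfurc
  rw [h.leaves_sub_one_div hr, h.prodMr_eq_prodW hr, ← N_mul_prodW,
    Nat.mul_div_cancel _ (prodW_pos T)]

end RTree
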